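/- Let $(\Xi_l)_{l \geq L_0}$ be a sequence of independent integrable real-valued random variables with $\mathbb{E}[\Xi_l] = a_l - a_{l-1}$ for a real sequence $(a_l)_{l \geq L_0 - 1}$ with $a_{L_0-1} = 0$ and $a_l \to a$ as $l \to \infty$. Let $\mathbb{P}_L$ be a probability mass function on $\{L_0, L_0+1, \dots\}$ with $\mathbb{P}_L(l) > 0$ for all $l$, and let $L \sim \mathbb{P}_L$ be independent of $(\Xi_l)$. If $\sum_{l \geq L_0} \mathbb{E}[\Xi_l^2]/\mathbb{P}_L(l) < \infty$, then the estimator $\widehat{a} = \Xi_L / \mathbb{P}_L(L)$ satisfies $\mathbb{E}[\widehat{a}] = a$ and $\mathbb{E}[\widehat{a}^2] < \infty$. -/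

import Mathlib

open MeasureTheory ProbabilityTheory Filter

/-!
On the event `{L = l}` the estimator equals `Ξ l / pL l`, and this event is independent of `Ξ l`
and has probability `pL l`. Hence `∫_{L = l} â = 𝔼 Ξ_l = a_l - a_{l-1}` and
`∫_{L = l} â² = 𝔼 Ξ_l² / pL l`. Summability of the latter makes `â` square integrable, hence
integrable, and countable additivity of the integral writes `𝔼 â` as the series of the
increments `a_l - a_{l-1}`, whose partial sums `a_{N-1}` tend to `a`.
-/

open Finset in
theorem sum_range_ite_sub_pred {G : Type*} [AddCommGroup G] {a : ℕ → G} {L0 : ℕ}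
    (ha0 : a (L0 - 1) = 0) {N : ℕ} (hN : L0 ≤ N) :
    ∑ l ∈ range N, (if L0 ≤ l then a l - a (l - 1) else 0) = a (N - 1) := by
  induction N, hN using Nat.le_induction with
  | base => exact (sum_eq_zero fun l hl => if_neg (by simpa using hl)).trans ha0.symm
  | succ N hN ih => simp [sum_range_succ, ih, hN]

theorem tendsto_sum_range_ite_sub_pred {G : Type*} [AddCommGroup G] [TopologicalSpace G]
    {a : ℕ → G} {L0 : ℕ} {A : G} (ha0 : a (L0 - 1) = 0) (ha : Tendsto a atTop (nhds A)) :
    Tendsto (fun N => ∑ l ∈ Finset.range N, if L0 ≤ l then a l - a (l - 1) else 0)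
      atTop (nhds A) :=
  (ha.comp (tendsto_sub_atTop_nat 1)).congr' <|
    (eventually_ge_atTop L0).mono fun _ hN => (sum_range_ite_sub_pred ha0 hN).symm

theorem iUnion_preimage_singleton_eq_univ {Ω β : Type*} (L : Ω → β) :
    ⋃ b, L ⁻¹' {b} = Set.univ := by
  rw [← Set.preimage_iUnion, Set.iUnion_of_singleton, Set.preimage_univ]

section RandomIndex

variable {Ω : Type*} {L : Ω → ℕ} {Y : ℕ → Ω → ℝ}

def atIndex (Y : ℕ → Ω → ℝ) (L : Ω → ℕ) (ω : Ω) : ℝ := Y (L ω) ω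

theorem atIndex_eqOn_preimage_singleton (l : ℕ) : Set.EqOn (atIndex Y L) (Y l) (L ⁻¹' {l}) :=
  fun ω (hω : L ω = l) => by rw [atIndex, hω]

variable [MeasurableSpace Ω] {μ : Measure Ω}

theorem setIntegral_atIndex_preimage_singleton
    (hind : IndepFun L (fun ω l => Y l ω) μ) (hL : Measurable L) (l : ℕ)
    (hY : AEMeasurable (Y l) μ) :
    ∫ ω in L ⁻¹' {l}, atIndex Y L ω ∂μ = μ.real (L ⁻¹' {l}) * ∫ ω, Y l ω ∂μ := by
  have hindl : Indep (MeasurableSpace.comap L inferInstance)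
      (MeasurableSpace.comap (Y l) inferInstance) μ :=
    (IndepFun_iff_Indep _ _ _).1 (hind.comp measurable_id (measurable_pi_apply l))
  rw [setIntegral_congr_fun (hL (measurableSet_singleton l)) (atIndex_eqOn_preimage_singleton l)]
  exact hindl.setIntegral_eq_mul hL.comap_le (f := id) hY
    ⟨{l}, measurableSet_singleton l, rfl⟩ aestronglyMeasurable_id

theorem aestronglyMeasurable_atIndex (hL : Measurable L)
    (hY : ∀ l, AEStronglyMeasurable (Y l) μ) : AEStronglyMeasurable (atIndex Y L) μ := by
  rw [← Measure.restrict_univ (μ := μ), ← iUnion_preimage_singleton_eq_univ L,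
    aestronglyMeasurable_iUnion_iff]
  exact fun l => (hY l).restrict.congr
    ((atIndex_eqOn_preimage_singleton l).aeEq_restrict (hL (measurableSet_singleton l))).symm

theorem integrable_atIndex (hind : IndepFun L (fun ω l => Y l ω) μ) (hL : Measurable L)
    (hY : ∀ l, Integrable (Y l) μ)
    (hsum : Summable fun l => μ.real (L ⁻¹' {l}) * ∫ ω, ‖Y l ω‖ ∂μ) :
    Integrable (atIndex Y L) μ := by
  have hpiece (l : ℕ) : IntegrableOn (atIndex Y L) (L ⁻¹' {l}) μ :=
    (hY l).integrableOn.congr_fun (atIndex_eqOn_preimage_singleton l).symm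
      (hL (measurableSet_singleton l))
  have hnorm (l : ℕ) : ∫ ω in L ⁻¹' {l}, ‖atIndex Y L ω‖ ∂μ
      = μ.real (L ⁻¹' {l}) * ∫ ω, ‖Y l ω‖ ∂μ :=
    setIntegral_atIndex_preimage_singleton (Y := fun l ω => ‖Y l ω‖)
      (hind.comp measurable_id (measurable_pi_lambda _ fun l => (measurable_pi_apply l).norm))
      hL l (hY l).norm.aemeasurable
  have := integrableOn_iUnion_of_summable_integral_norm hpiece
    (hsum.congr fun l => (hnorm l).symm)
  rwa [iUnion_preimage_singleton_eq_univ, integrableOn_univ] at this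

theorem hasSum_integral_atIndex (hind : IndepFun L (fun ω l => Y l ω) μ) (hL : Measurable L)
    (hY : ∀ l, AEMeasurable (Y l) μ) (hint : Integrable (atIndex Y L) μ) :
    HasSum (fun l => μ.real (L ⁻¹' {l}) * ∫ ω, Y l ω ∂μ) (∫ ω, atIndex Y L ω ∂μ) := by
  have := hasSum_integral_iUnion (fun l => hL (measurableSet_singleton l))
    (pairwise_disjoint_fiber L)
    (by rw [iUnion_preimage_singleton_eq_univ]; exact hint.integrableOn)
  rw [iUnion_preimage_singleton_eq_univ, Measure.restrict_univ] at this
  simpa only [setIntegral_atIndex_preimage_singleton hind hL _ (hY _)] using this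

end RandomIndex

theorem stmt0_general {Ω : Type*} [MeasurableSpace Ω] (μ : Measure Ω) [IsProbabilityMeasure μ]
    (L0 : ℕ)
    (Ξ : ℕ → Ω → ℝ) (a : ℕ → ℝ) (alim : ℝ)
    (hsq : ∀ l, MemLp (Ξ l) 2 μ)
    (ha0 : a (L0 - 1) = 0)
    (hmean : ∀ l, L0 ≤ l → ∫ ω, Ξ l ω ∂μ = a l - a (l - 1))
    (halim : Tendsto a atTop (nhds alim))
    (pL : ℕ → ℝ)
    (hpLpos : ∀ l, L0 ≤ l → 0 < pL l)
    (L : Ω → ℕ) (hLmeas : Measurable L)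
    (hLlaw : ∀ l, (μ (L ⁻¹' {l})).toReal = if L0 ≤ l then pL l else 0)
    (hLindep : IndepFun L (fun ω l => Ξ l ω) μ)
    (hcond : Summable (fun l : ℕ =>
      if L0 ≤ l then (∫ ω, (Ξ l ω) ^ 2 ∂μ) / pL l else 0)) :
    (∫ ω, Ξ (L ω) ω / pL (L ω) ∂μ) = alim ∧
      Integrable (fun ω => (Ξ (L ω) ω / pL (L ω)) ^ 2) μ := by
  set Y : ℕ → Ω → ℝ := fun l ω => Ξ l ω / pL l
  have hY (l : ℕ) : MemLp (Y l) 2 μ := by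
    simpa only [Y, div_eq_mul_inv] using (hsq l).mul_const (pL l)⁻¹
  have hind : IndepFun L (fun ω l => Y l ω) μ :=
    hLindep.comp measurable_id
      (measurable_pi_lambda _ fun l => (measurable_pi_apply l).div_const _)
  have hsq_term (l : ℕ) : μ.real (L ⁻¹' {l}) * ∫ ω, ‖Y l ω ^ 2‖ ∂μ
      = if L0 ≤ l then (∫ ω, (Ξ l ω) ^ 2 ∂μ) / pL l else 0 := by
    rw [measureReal_def, hLlaw]
    split_ifs with hl
    · simp only [Y, Real.norm_eq_abs, div_pow, abs_div, abs_pow, sq_abs, integral_div]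
      field_simp [(hpLpos l hl).ne']
    · exact zero_mul _
  have hmean_term (l : ℕ) : μ.real (L ⁻¹' {l}) * ∫ ω, Y l ω ∂μ
      = if L0 ≤ l then a l - a (l - 1) else 0 := by
    rw [measureReal_def, hLlaw]
    split_ifs with hl
    · rw [integral_div, hmean l hl]
      field_simp [(hpLpos l hl).ne']
    · exact zero_mul _
  have hsq_int : Integrable (fun ω => Y (L ω) ω ^ 2) μ :=
    integrable_atIndex (Y := fun l ω => Y l ω ^ 2)
      (hind.comp measurable_id
        (measurable_pi_lambda _ fun l => (measurable_pi_apply l).pow_const 2))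
      hLmeas (fun l => (hY l).integrable_sq) (hcond.congr fun l => (hsq_term l).symm)
  have hint : Integrable (atIndex Y L) μ :=
    ((memLp_two_iff_integrable_sq (aestronglyMeasurable_atIndex hLmeas fun l => (hY l).1)).2
      hsq_int).integrable one_le_two
  have hsum := hasSum_integral_atIndex hind hLmeas (fun l => (hY l).1.aemeasurable) hint
  simp only [hmean_term] at hsum
  exact ⟨tendsto_nhds_unique hsum.tendsto_sum_nat (tendsto_sum_range_ite_sub_pred ha0 halim),
    hsq_int⟩

/-- Single-term randomized (Rhee–Glynn) estimator: unbiasedness and finite second moment. -/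
theorem stmt0 {Ω : Type*} [MeasurableSpace Ω] (μ : Measure Ω) [IsProbabilityMeasure μ]
    (L0 : ℕ) (hL0 : 1 ≤ L0)
    (Ξ : ℕ → Ω → ℝ) (a : ℕ → ℝ) (alim : ℝ)
    (hmeas : ∀ l, Measurable (Ξ l))
    (hint : ∀ l, Integrable (Ξ l) μ)
    (hsq : ∀ l, MemLp (Ξ l) 2 μ)
    (hΞindep : iIndepFun Ξ μ)
    (ha0 : a (L0 - 1) = 0)
    (hmean : ∀ l, L0 ≤ l → ∫ ω, Ξ l ω ∂μ = a l - a (l - 1))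
    (halim : Tendsto a atTop (nhds alim))
    (pL : ℕ → ℝ)
    (hpLpos : ∀ l, L0 ≤ l → 0 < pL l)
    (hpLsum : (∑' l : {l : ℕ // L0 ≤ l}, pL l) = 1)
    (L : Ω → ℕ) (hLmeas : Measurable L)
    (hLsupp : ∀ ω, L0 ≤ L ω)
    (hLlaw : ∀ l, (μ (L ⁻¹' {l})).toReal = if L0 ≤ l then pL l else 0)
    (hLindep : IndepFun L (fun ω l => Ξ l ω) μ)
    (hcond : Summable (fun l : ℕ =>
      if L0 ≤ l then (∫ ω, (Ξ l ω) ^ 2 ∂μ) / pL l else 0)) :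
    (∫ ω, Ξ (L ω) ω / pL (L ω) ∂μ) = alim ∧
      Integrable (fun ω => (Ξ (L ω) ω / pL (L ω)) ^ 2) μ :=
  stmt0_general μ L0 Ξ a alim hsq ha0 hmean halim pL hpLpos L hLmeas hLlaw hLindep hcond
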